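/- arXiv:0910.3646 — 3 statements merged into one kernel-verified Lean document; each statement's English description precedes it below -/
import Mathlib

section
/- Let I ⊆ ℝ be an open interval and let γ₁, γ₂ : I → ℝ² be smooth curves, each parametrized by equi-affine arc length, i.e. det(γᵢ'(s), γᵢ''(s)) = 1 for all s ∈ I and i = 1, 2. Then there exist a matrix A ∈ SL(2, ℝ) and a vector b ∈ ℝ² such that γ₂(s) = A·γ₁(s) + b for all s ∈ I, if and only if the equi-affine curvatures agree: det(γ₁''(s), γ₁'''(s)) = det(γ₂''(s), γ₂'''(s)) for all s ∈ I. -/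
open Set Filter Topology


/-- The determinant of the 2×2 matrix with columns `w₁` and `w₂`. -/
def det2 (w₁ w₂ : Fin 2 → ℝ) : ℝ := w₁ 0 * w₂ 1 - w₁ 1 * w₂ 0



lemma aux_eqOn_iter {a b : ℝ} {f : ℝ → Fin 2 → ℝ} (n : ℕ) :
    Set.EqOn (iteratedDerivWithin n f (Set.Ioo a b)) (iteratedDeriv n f) (Set.Ioo a b) :=
  fun x hx => by
    simp only [iteratedDerivWithin, iteratedDeriv,
      iteratedFDerivWithin_of_isOpen n isOpen_Ioo hx]

lemma aux_hasDerivAt {a b : ℝ} {f : ℝ → Fin 2 → ℝ}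
    (hf : ContDiffOn ℝ (⊤ : ℕ∞) f (Set.Ioo a b)) (n : ℕ) {s : ℝ} (hs : s ∈ Set.Ioo a b) :
    HasDerivAt (iteratedDeriv n f) (iteratedDeriv (n + 1) f s) s := by
  have hU : UniqueDiffOn ℝ (Set.Ioo a b) := isOpen_Ioo.uniqueDiffOn
  have hdiff : DifferentiableWithinAt ℝ (iteratedDerivWithin n f (Set.Ioo a b)) (Set.Ioo a b) s :=
    hf.differentiableOn_iteratedDerivWithin (by exact_mod_cast lt_top_iff_ne_top.2 (by simp)) hU s hs
  have h1 : DifferentiableAt ℝ (iteratedDerivWithin n f (Set.Ioo a b)) s :=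
    hdiff.differentiableAt (isOpen_Ioo.mem_nhds hs)
  have heq : iteratedDerivWithin n f (Set.Ioo a b) =ᶠ[𝓝 s] iteratedDeriv n f :=
    (aux_eqOn_iter n).eventuallyEq_of_mem (isOpen_Ioo.mem_nhds hs)
  have h2 : DifferentiableAt ℝ (iteratedDeriv n f) s := h1.congr_of_eventuallyEq heq.symm
  have := h2.hasDerivAt
  rwa [← iteratedDeriv_succ] at this

lemma aux_hasDerivAt_comp {a b : ℝ} {f : ℝ → Fin 2 → ℝ}
    (hf : ContDiffOn ℝ (⊤ : ℕ∞) f (Set.Ioo a b)) (n : ℕ) {s : ℝ} (hs : s ∈ Set.Ioo a b) (i : Fin 2) :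
    HasDerivAt (fun t => iteratedDeriv n f t i) (iteratedDeriv (n + 1) f s i) s :=
  hasDerivAt_pi.1 (aux_hasDerivAt hf n hs) i

lemma aux_const {a b : ℝ} {f : ℝ → ℝ} (h : ∀ s ∈ Set.Ioo a b, HasDerivAt f 0 s)
    {x y : ℝ} (hx : x ∈ Set.Ioo a b) (hy : y ∈ Set.Ioo a b) : f x = f y := by
  refine (convex_Ioo a b).is_const_of_fderivWithin_eq_zero
    (fun z hz => ((h z hz).differentiableAt).differentiableWithinAt) (fun z hz => ?_) hx hy
  rw [fderivWithin_of_isOpen isOpen_Ioo hz, (h z hz).hasFDerivAt.fderiv]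
  ext
  simp

/-- γ''' = -κ γ' componentwise. -/
lemma aux_third {a b : ℝ} {γ : ℝ → Fin 2 → ℝ}
    (hγ : ContDiffOn ℝ (⊤ : ℕ∞) γ (Set.Ioo a b))
    (harc : ∀ s ∈ Set.Ioo a b, det2 (iteratedDeriv 1 γ s) (iteratedDeriv 2 γ s) = 1)
    {s : ℝ} (hs : s ∈ Set.Ioo a b) (j : Fin 2) :
    iteratedDeriv 3 γ s j =
      -(det2 (iteratedDeriv 2 γ s) (iteratedDeriv 3 γ s)) * iteratedDeriv 1 γ s j := by
  have h0 : HasDerivAt (fun t => iteratedDeriv 1 γ t 0 * iteratedDeriv 2 γ t 1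
        - iteratedDeriv 1 γ t 1 * iteratedDeriv 2 γ t 0)
      ((iteratedDeriv 2 γ s 0 * iteratedDeriv 2 γ s 1
          + iteratedDeriv 1 γ s 0 * iteratedDeriv 3 γ s 1)
        - (iteratedDeriv 2 γ s 1 * iteratedDeriv 2 γ s 0
          + iteratedDeriv 1 γ s 1 * iteratedDeriv 3 γ s 0)) s :=
    ((aux_hasDerivAt_comp hγ 1 hs 0).mul (aux_hasDerivAt_comp hγ 2 hs 1)).sub
      ((aux_hasDerivAt_comp hγ 1 hs 1).mul (aux_hasDerivAt_comp hγ 2 hs 0))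
  have heq : (fun t => iteratedDeriv 1 γ t 0 * iteratedDeriv 2 γ t 1
        - iteratedDeriv 1 γ t 1 * iteratedDeriv 2 γ t 0) =ᶠ[𝓝 s] fun _ => (1 : ℝ) := by
    filter_upwards [isOpen_Ioo.mem_nhds hs] with t ht
    simpa [det2] using harc t ht
  have h1 : HasDerivAt (fun t => iteratedDeriv 1 γ t 0 * iteratedDeriv 2 γ t 1
        - iteratedDeriv 1 γ t 1 * iteratedDeriv 2 γ t 0) 0 s :=
    (hasDerivAt_const s (1 : ℝ)).congr_of_eventuallyEq heq
  have hz := h1.unique h0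
  have ha := harc s hs
  simp only [det2] at ha ⊢
  fin_cases j <;> simp only [Fin.zero_eta, Fin.mk_one]
  · linear_combination (-(iteratedDeriv 3 γ s 0)) * ha
      - (iteratedDeriv 2 γ s 0) * hz
  · linear_combination (-(iteratedDeriv 3 γ s 1)) * ha
      - (iteratedDeriv 2 γ s 1) * hz

lemma aux_mulVec (A : Matrix (Fin 2) (Fin 2) ℝ) (x : Fin 2 → ℝ) (i : Fin 2) :
    A.mulVec x i = A i 0 * x 0 + A i 1 * x 1 := by
  simp [Matrix.mulVec, dotProduct, Fin.sum_univ_two]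

/-- Two smooth curves in the equi-affine plane, each parametrized by equi-affine
arc length, are congruent under the equi-affine group `SL(2,ℝ) ⋉ ℝ²` if and only
if their equi-affine curvatures agree. -/
theorem equiaffine_congruence (a b : ℝ) (γ₁ γ₂ : ℝ → Fin 2 → ℝ)
    (hγ₁ : ContDiffOn ℝ (⊤ : ℕ∞) γ₁ (Set.Ioo a b)) (hγ₂ : ContDiffOn ℝ (⊤ : ℕ∞) γ₂ (Set.Ioo a b))
    (harc₁ : ∀ s ∈ Set.Ioo a b, det2 (iteratedDeriv 1 γ₁ s) (iteratedDeriv 2 γ₁ s) = 1)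
    (harc₂ : ∀ s ∈ Set.Ioo a b, det2 (iteratedDeriv 1 γ₂ s) (iteratedDeriv 2 γ₂ s) = 1) :
    (∃ (A : Matrix (Fin 2) (Fin 2) ℝ) (v : Fin 2 → ℝ), A.det = 1 ∧
        ∀ s ∈ Set.Ioo a b, γ₂ s = A.mulVec (γ₁ s) + v) ↔
      (∀ s ∈ Set.Ioo a b,
        det2 (iteratedDeriv 2 γ₁ s) (iteratedDeriv 3 γ₁ s) =
          det2 (iteratedDeriv 2 γ₂ s) (iteratedDeriv 3 γ₂ s)) := by
  constructor
  · -- forward direction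
    rintro ⟨A, v, hdet, hAv⟩
    have key : ∀ n : ℕ, ∀ s ∈ Set.Ioo a b, ∀ i : Fin 2,
        iteratedDeriv (n + 1) γ₂ s i =
          A i 0 * iteratedDeriv (n + 1) γ₁ s 0 + A i 1 * iteratedDeriv (n + 1) γ₁ s 1 := by
      intro n
      induction n with
      | zero =>
        intro s hs i
        have h₂ : HasDerivAt (fun t => γ₂ t i) (iteratedDeriv 1 γ₂ s i) s := by
          have := aux_hasDerivAt_comp hγ₂ 0 hs i
          simpa [iteratedDeriv_zero] using this
        have h₁ : HasDerivAt (fun t => A i 0 * γ₁ t 0 + A i 1 * γ₁ t 1 + v i)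
            (A i 0 * iteratedDeriv 1 γ₁ s 0 + A i 1 * iteratedDeriv 1 γ₁ s 1) s := by
          have g0 : HasDerivAt (fun t => γ₁ t 0) (iteratedDeriv 1 γ₁ s 0) s := by
            have := aux_hasDerivAt_comp hγ₁ 0 hs 0
            simpa [iteratedDeriv_zero] using this
          have g1 : HasDerivAt (fun t => γ₁ t 1) (iteratedDeriv 1 γ₁ s 1) s := by
            have := aux_hasDerivAt_comp hγ₁ 0 hs 1
            simpa [iteratedDeriv_zero] using this
          exact ((g0.const_mul _).add (g1.const_mul _)).add_const _
        have heq : (fun t => γ₂ t i) =ᶠ[𝓝 s]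
            fun t => A i 0 * γ₁ t 0 + A i 1 * γ₁ t 1 + v i := by
          filter_upwards [isOpen_Ioo.mem_nhds hs] with t ht
          rw [hAv t ht]
          simp only [Pi.add_apply, aux_mulVec]
        exact ((h₁.congr_of_eventuallyEq heq).unique h₂).symm
      | succ n ih =>
        intro s hs i
        have h₂ : HasDerivAt (fun t => iteratedDeriv (n + 1) γ₂ t i)
            (iteratedDeriv (n + 2) γ₂ s i) s := aux_hasDerivAt_comp hγ₂ (n + 1) hs i
        have h₁ : HasDerivAt
            (fun t => A i 0 * iteratedDeriv (n + 1) γ₁ t 0 + A i 1 * iteratedDeriv (n + 1) γ₁ t 1)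
            (A i 0 * iteratedDeriv (n + 2) γ₁ s 0 + A i 1 * iteratedDeriv (n + 2) γ₁ s 1) s :=
          ((aux_hasDerivAt_comp hγ₁ (n + 1) hs 0).const_mul _).add
            ((aux_hasDerivAt_comp hγ₁ (n + 1) hs 1).const_mul _)
        have heq : (fun t => iteratedDeriv (n + 1) γ₂ t i) =ᶠ[𝓝 s]
            fun t => A i 0 * iteratedDeriv (n + 1) γ₁ t 0
              + A i 1 * iteratedDeriv (n + 1) γ₁ t 1 := by
          filter_upwards [isOpen_Ioo.mem_nhds hs] with t ht
          exact ih t ht i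
        exact ((h₁.congr_of_eventuallyEq heq).unique h₂).symm
    intro s hs
    have e20 := key 1 s hs 0
    have e21 := key 1 s hs 1
    have e30 := key 2 s hs 0
    have e31 := key 2 s hs 1
    have hd : A 0 0 * A 1 1 - A 0 1 * A 1 0 = 1 := by
      rw [← Matrix.det_fin_two]; exact hdet
    simp only [det2]
    norm_num at e20 e21 e30 e31
    rw [e20, e21, e30, e31]
    linear_combination (-(iteratedDeriv 2 γ₁ s 0 * iteratedDeriv 3 γ₁ s 1
      - iteratedDeriv 2 γ₁ s 1 * iteratedDeriv 3 γ₁ s 0)) * hd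
  · -- reverse direction
    intro hκ
    by_cases hab : a < b
    swap
    · refine ⟨1, 0, Matrix.det_one, fun s hs => absurd hs ?_⟩
      rw [Set.Ioo_eq_empty hab]
      exact Set.notMem_empty s
    obtain ⟨s₀, hs₀⟩ : ∃ s₀, s₀ ∈ Set.Ioo a b := ⟨(a + b) / 2, by constructor <;> linarith⟩
    -- entries of the transition matrix, as functions of s
    set g : Fin 2 → Fin 2 → ℝ → ℝ := fun i j t =>
      if j = 0 then
        iteratedDeriv 1 γ₂ t i * iteratedDeriv 2 γ₁ t 1
          - iteratedDeriv 2 γ₂ t i * iteratedDeriv 1 γ₁ t 1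
      else
        iteratedDeriv 2 γ₂ t i * iteratedDeriv 1 γ₁ t 0
          - iteratedDeriv 1 γ₂ t i * iteratedDeriv 2 γ₁ t 0 with hg_def
    have hgzero : ∀ (i j : Fin 2), ∀ s ∈ Set.Ioo a b, HasDerivAt (g i j) 0 s := by
      intro i j s hs
      have h31 := aux_third hγ₁ harc₁ hs
      have h32 := aux_third hγ₂ harc₂ hs
      have hκs := hκ s hs
      simp only [det2] at h31 h32 hκs
      fin_cases j
      · have hD : HasDerivAt (g i 0)
            ((iteratedDeriv 2 γ₂ s i * iteratedDeriv 2 γ₁ s 1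
              + iteratedDeriv 1 γ₂ s i * iteratedDeriv 3 γ₁ s 1)
            - (iteratedDeriv 3 γ₂ s i * iteratedDeriv 1 γ₁ s 1
              + iteratedDeriv 2 γ₂ s i * iteratedDeriv 2 γ₁ s 1)) s := by
          simp only [hg_def, if_pos rfl]
          exact ((aux_hasDerivAt_comp hγ₂ 1 hs i).mul (aux_hasDerivAt_comp hγ₁ 2 hs 1)).sub
            ((aux_hasDerivAt_comp hγ₂ 2 hs i).mul (aux_hasDerivAt_comp hγ₁ 1 hs 1))
        refine hD.congr_deriv (Eq.symm ?_)
        linear_combination (-(iteratedDeriv 1 γ₂ s i)) * h31 1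
          + (iteratedDeriv 1 γ₁ s 1) * h32 i
          + (iteratedDeriv 1 γ₂ s i * iteratedDeriv 1 γ₁ s 1) * hκs
      · have hD : HasDerivAt (g i 1)
            ((iteratedDeriv 3 γ₂ s i * iteratedDeriv 1 γ₁ s 0
              + iteratedDeriv 2 γ₂ s i * iteratedDeriv 2 γ₁ s 0)
            - (iteratedDeriv 2 γ₂ s i * iteratedDeriv 2 γ₁ s 0
              + iteratedDeriv 1 γ₂ s i * iteratedDeriv 3 γ₁ s 0)) s := by
          simp only [hg_def, if_neg (by decide : ¬(1 : Fin 2) = 0)]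
          exact ((aux_hasDerivAt_comp hγ₂ 2 hs i).mul (aux_hasDerivAt_comp hγ₁ 1 hs 0)).sub
            ((aux_hasDerivAt_comp hγ₂ 1 hs i).mul (aux_hasDerivAt_comp hγ₁ 2 hs 0))
        refine hD.congr_deriv (Eq.symm ?_)
        linear_combination (iteratedDeriv 1 γ₂ s i) * h31 0
          - (iteratedDeriv 1 γ₁ s 0) * h32 i
          - (iteratedDeriv 1 γ₂ s i * iteratedDeriv 1 γ₁ s 0) * hκs
    have hgconst : ∀ (i j : Fin 2), ∀ s ∈ Set.Ioo a b, g i j s = g i j s₀ :=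
      fun i j s hs => aux_const (hgzero i j) hs hs₀
    refine ⟨Matrix.of ![![g 0 0 s₀, g 0 1 s₀], ![g 1 0 s₀, g 1 1 s₀]],
      fun i => γ₂ s₀ i - (g i 0 s₀ * γ₁ s₀ 0 + g i 1 s₀ * γ₁ s₀ 1), ?_, ?_⟩
    · rw [Matrix.det_fin_two]
      have h1 := harc₁ s₀ hs₀
      have h2 := harc₂ s₀ hs₀
      simp only [det2] at h1 h2
      simp only [Matrix.of_apply, Matrix.cons_val', Matrix.cons_val_zero, Matrix.cons_val_one,
        Matrix.head_cons, Matrix.empty_val', Matrix.cons_val_fin_one, Matrix.head_fin_const,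
        hg_def, if_pos rfl, if_neg (by decide : ¬(1 : Fin 2) = 0)]
      linear_combination (iteratedDeriv 1 γ₂ s₀ 0 * iteratedDeriv 2 γ₂ s₀ 1
        - iteratedDeriv 1 γ₂ s₀ 1 * iteratedDeriv 2 γ₂ s₀ 0) * h1 + h2
    · intro s hs
      -- first: γ₂' = A γ₁' on the interval
      have hmul : ∀ t ∈ Set.Ioo a b, ∀ i : Fin 2,
          iteratedDeriv 1 γ₂ t i =
            g i 0 s₀ * iteratedDeriv 1 γ₁ t 0 + g i 1 s₀ * iteratedDeriv 1 γ₁ t 1 := by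
        intro t ht i
        rw [← hgconst i 0 t ht, ← hgconst i 1 t ht]
        have h1 := harc₁ t ht
        simp only [det2] at h1
        simp only [hg_def, if_pos rfl, if_neg (by decide : ¬(1 : Fin 2) = 0)]
        linear_combination (-(iteratedDeriv 1 γ₂ t i)) * h1
      -- the difference γ₂ - A·γ₁ is constant
      have hvconst : ∀ i : Fin 2,
          γ₂ s i - (g i 0 s₀ * γ₁ s 0 + g i 1 s₀ * γ₁ s 1)
            = γ₂ s₀ i - (g i 0 s₀ * γ₁ s₀ 0 + g i 1 s₀ * γ₁ s₀ 1) := by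
        intro i
        refine aux_const
          (f := fun t => γ₂ t i - (g i 0 s₀ * γ₁ t 0 + g i 1 s₀ * γ₁ t 1))
          (fun u hu => ?_) hs hs₀
        have h2 : HasDerivAt (fun t => γ₂ t i) (iteratedDeriv 1 γ₂ u i) u := by
          simpa [iteratedDeriv_zero] using aux_hasDerivAt_comp hγ₂ 0 hu i
        have g0 : HasDerivAt (fun t => γ₁ t 0) (iteratedDeriv 1 γ₁ u 0) u := by
          simpa [iteratedDeriv_zero] using aux_hasDerivAt_comp hγ₁ 0 hu 0
        have g1 : HasDerivAt (fun t => γ₁ t 1) (iteratedDeriv 1 γ₁ u 1) u := by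
          simpa [iteratedDeriv_zero] using aux_hasDerivAt_comp hγ₁ 0 hu 1
        have hD := h2.sub ((g0.const_mul (g i 0 s₀)).add (g1.const_mul (g i 1 s₀)))
        refine hD.congr_deriv (Eq.symm ?_)
        rw [hmul u hu i]
        ring
      have hA : ∀ i j : Fin 2,
          (Matrix.of ![![g 0 0 s₀, g 0 1 s₀], ![g 1 0 s₀, g 1 1 s₀]]) i j = g i j s₀ := by
        intro i j
        fin_cases i <;> fin_cases j <;> rfl
      funext i
      have hv := hvconst i
      simp only [Pi.add_apply]
      rw [aux_mulVec, hA i 0, hA i 1]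
      linarith [hv]
end

section
/- Let U ⊆ ℝ be open and f : ℝ → ℝ smooth on U with f''(x) > 0 for all x ∈ U. Define the Frenet frame matrix 𝔉(x) as the 3×3 real matrix with rows (1, 0, 0), (x, f''(x)^(−1/3), −(1/3)·f'''(x)·f''(x)^(−5/3)), and (f(x), f'(x)·f''(x)^(−1/3), (f''(x)² − (1/3)·f'''(x)·f'(x))·f''(x)^(−5/3)). Then for all x ∈ U: (a) det 𝔉(x) = 1 (equivalently, the lower-right 2×2 block of 𝔉(x) lies in SL(2, ℝ)); and (b) 𝔉 satisfies the Frenet equation 𝔉'(x) = f''(x)^(1/3) · 𝔉(x) · M(κ(x)), where M(κ) is the 3×3 matrix with rows (0, 0, 0), (1, 0, κ), (0, 1, 0), 𝔉'(x) denotes the entrywise derivative, and κ(x) = (5·f'''(x)² − 3·f''(x)·f''''(x)) / (9·f''(x)^(8/3)). -/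
open Real

/-- The Frenet frame matrix of the graph curve `x ↦ (x, f(x))` in the
equi-affine plane. -/
noncomputable def frenetMat (f : ℝ → ℝ) (x : ℝ) : Matrix (Fin 3) (Fin 3) ℝ :=
  !![1, 0, 0;
     x, (iteratedDeriv 2 f x) ^ (-(1 : ℝ) / 3),
        -(1 / 3) * iteratedDeriv 3 f x * (iteratedDeriv 2 f x) ^ (-(5 : ℝ) / 3);
     f x, deriv f x * (iteratedDeriv 2 f x) ^ (-(1 : ℝ) / 3),
        ((iteratedDeriv 2 f x) ^ 2 - (1 / 3) * iteratedDeriv 3 f x * deriv f x) *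
          (iteratedDeriv 2 f x) ^ (-(5 : ℝ) / 3)]

/-- The matrix `M(κ)` with rows `(0,0,0)`, `(1,0,κ)`, `(0,1,0)`. -/
def frenetM (κ : ℝ) : Matrix (Fin 3) (Fin 3) ℝ := !![0, 0, 0; 1, 0, κ; 0, 1, 0]

/-- The equi-affine curvature of the graph curve `x ↦ (x, f(x))`. -/
noncomputable def graphCurvature (f : ℝ → ℝ) (x : ℝ) : ℝ :=
  (5 * (iteratedDeriv 3 f x) ^ 2 - 3 * iteratedDeriv 2 f x * iteratedDeriv 4 f x) /
    (9 * (iteratedDeriv 2 f x) ^ ((8 : ℝ) / 3))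

private theorem finmk2' : (⟨2, by omega⟩ : Fin 3) = (2 : Fin 3) := rfl

/-- The Frenet frame matrix `𝔉(x)` of a graph curve has determinant one (its
lower-right 2×2 block lies in `SL(2,ℝ)`), and satisfies the Frenet equation
`𝔉'(x) = f''(x)^{1/3} · 𝔉(x) · M(κ(x))`. -/
theorem frenet_frame_graph (U : Set ℝ) (hU : IsOpen U) (f : ℝ → ℝ)
    (hf : ContDiffOn ℝ (⊤ : ℕ∞) f U) (hpos : ∀ x ∈ U, 0 < iteratedDeriv 2 f x) :
    ∀ x ∈ U,
      (frenetMat f x).det = 1 ∧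
      (!![frenetMat f x 1 1, frenetMat f x 1 2;
          frenetMat f x 2 1, frenetMat f x 2 2] : Matrix (Fin 2) (Fin 2) ℝ).det = 1 ∧
      ∀ i j : Fin 3,
        deriv (fun t => frenetMat f t i j) x =
          (iteratedDeriv 2 f x) ^ ((1 : ℝ) / 3) *
            (frenetMat f x * frenetM (graphCurvature f x)) i j := by
  intro x hx
  have hG : 0 < iteratedDeriv 2 f x := hpos x hx
  -- derivatives of the iterated derivatives
  have hkey : ∀ n : ℕ, HasDerivAt (iteratedDeriv n f) (iteratedDeriv (n + 1) f x) x := by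
    intro n
    have hEq : Set.EqOn (iteratedDerivWithin n f U) (iteratedDeriv n f) U := by
      intro y hy
      rw [iteratedDerivWithin_eq_iteratedFDerivWithin, iteratedDeriv_eq_iteratedFDeriv,
        iteratedFDerivWithin_of_isOpen n hU hy]
    have hd : DifferentiableWithinAt ℝ (iteratedDerivWithin n f U) U x :=
      (hf.differentiableOn_iteratedDerivWithin
        (by exact_mod_cast lt_top_iff_ne_top.2 (by simp)) hU.uniqueDiffOn) x hx
    have hd2 : DifferentiableAt ℝ (iteratedDeriv n f) x :=
      (hd.differentiableAt (hU.mem_nhds hx)).congr_of_eventuallyEq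
        (hEq.eventuallyEq_of_mem (hU.mem_nhds hx)).symm
    rw [iteratedDeriv_succ]
    exact hd2.hasDerivAt
  have hd1 : HasDerivAt f (deriv f x) x := by
    have h := hkey 0
    simp only [iteratedDeriv_zero, zero_add, iteratedDeriv_one] at h
    exact h
  have hd2 : HasDerivAt (deriv f) (iteratedDeriv 2 f x) x := by
    have h := hkey 1
    simp only [iteratedDeriv_one] at h
    exact h
  have hd3 : HasDerivAt (iteratedDeriv 2 f) (iteratedDeriv 3 f x) x := hkey 2
  have hd4 : HasDerivAt (iteratedDeriv 3 f) (iteratedDeriv 4 f x) x := hkey 3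
  -- a positive cube root of f''(x)
  obtain ⟨r, hrpos, hr⟩ : ∃ r : ℝ, 0 < r ∧ iteratedDeriv 2 f x = r ^ 3 := by
    refine ⟨iteratedDeriv 2 f x ^ ((1 : ℝ) / 3), Real.rpow_pos_of_pos hG _, ?_⟩
    rw [← Real.rpow_natCast (iteratedDeriv 2 f x ^ ((1 : ℝ) / 3)) 3, ← Real.rpow_mul hG.le]
    norm_num
  have hrne : r ≠ 0 := hrpos.ne'
  -- rpow computation rules in terms of `r`
  have kk : ∀ (a : ℝ) (n : ℕ), 3 * a = -(n : ℝ) → (r ^ 3 : ℝ) ^ a = (r ^ n)⁻¹ := by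
    intro a n h
    rw [← Real.rpow_natCast r 3, ← Real.rpow_mul hrpos.le]
    push_cast
    rw [h, Real.rpow_neg hrpos.le, Real.rpow_natCast]
  have kp : ∀ (a : ℝ) (n : ℕ), 3 * a = (n : ℝ) → (r ^ 3 : ℝ) ^ a = r ^ n := by
    intro a n h
    rw [← Real.rpow_natCast r 3, ← Real.rpow_mul hrpos.le]
    push_cast
    rw [h, Real.rpow_natCast]
  have k1 : (r ^ 3 : ℝ) ^ (-(1 : ℝ) / 3) = (r ^ 1)⁻¹ := kk _ 1 (by norm_num)
  have k5 : (r ^ 3 : ℝ) ^ (-(5 : ℝ) / 3) = (r ^ 5)⁻¹ := kk _ 5 (by norm_num)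
  have k4 : (r ^ 3 : ℝ) ^ (-(1 : ℝ) / 3 - 1) = (r ^ 4)⁻¹ := kk _ 4 (by norm_num)
  have k8m : (r ^ 3 : ℝ) ^ (-(5 : ℝ) / 3 - 1) = (r ^ 8)⁻¹ := kk _ 8 (by norm_num)
  have k8 : (r ^ 3 : ℝ) ^ ((8 : ℝ) / 3) = r ^ 8 := kp _ 8 (by norm_num)
  have k13 : (r ^ 3 : ℝ) ^ ((1 : ℝ) / 3) = r ^ 1 := kp _ 1 (by norm_num)
  refine ⟨?_, ?_, ?_⟩
  · -- determinant of the 3×3 frame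
    rw [Matrix.det_fin_three]
    simp only [frenetMat, Matrix.of_apply, Matrix.cons_val', Matrix.cons_val_zero,
      Matrix.cons_val_one, Matrix.head_cons, Matrix.empty_val', Matrix.cons_val_fin_one,
      Matrix.head_fin_const, finmk2', Matrix.cons_val_two, Matrix.tail_cons,
      mul_zero, zero_mul, mul_one, one_mul, add_zero, zero_add, sub_zero]
    rw [hr, k1, k5]
    field_simp
    ring
  · -- determinant of the lower-right 2×2 block
    rw [Matrix.det_fin_two_of]
    simp only [frenetMat, Matrix.of_apply, Matrix.cons_val', Matrix.cons_val_zero,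
      Matrix.cons_val_one, Matrix.head_cons, Matrix.empty_val', Matrix.cons_val_fin_one,
      Matrix.head_fin_const, finmk2', Matrix.cons_val_two, Matrix.tail_cons]
    rw [hr, k1, k5]
    field_simp
    ring
  · -- the Frenet equation, entry by entry
    intro i j
    fin_cases i <;> fin_cases j <;>
      simp only [frenetMat, frenetM, graphCurvature, Matrix.mul_apply, Fin.sum_univ_three,
        Matrix.of_apply, Matrix.cons_val', Matrix.cons_val_zero, Matrix.cons_val_one,
        Matrix.head_cons, Matrix.empty_val', Matrix.cons_val_fin_one, Matrix.head_fin_const,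
        finmk2', Matrix.cons_val_two, Matrix.tail_cons, Fin.mk_zero, Fin.mk_one, Fin.isValue,
        mul_zero, zero_mul, mul_one, one_mul, add_zero, zero_add]
    · simp
    · simp
    · simp
    · -- entry (1,0)
      rw [deriv_id'', hr, k13, k1]
      field_simp
    · -- entry (1,1)
      have h11 : HasDerivAt (fun t => iteratedDeriv 2 f t ^ (-(1 : ℝ) / 3))
          (iteratedDeriv 3 f x * (-(1 : ℝ) / 3) * iteratedDeriv 2 f x ^ (-(1 : ℝ) / 3 - 1)) x :=
        hd3.rpow_const (Or.inl hG.ne')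
      rw [h11.deriv, hr, k13, k4, k5]
      field_simp
    · -- entry (1,2)
      have h12 : HasDerivAt
          (fun t => -(1 / 3) * iteratedDeriv 3 f t * iteratedDeriv 2 f t ^ (-(5 : ℝ) / 3))
          (-(1 / 3) * iteratedDeriv 4 f x * iteratedDeriv 2 f x ^ (-(5 : ℝ) / 3) +
            -(1 / 3) * iteratedDeriv 3 f x *
              (iteratedDeriv 3 f x * (-(5 : ℝ) / 3) *
                iteratedDeriv 2 f x ^ (-(5 : ℝ) / 3 - 1))) x := by
        exact (hd4.const_mul (-(1 / 3) : ℝ)).mul (hd3.rpow_const (Or.inl hG.ne'))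
      rw [h12.deriv, hr, k13, k1, k5, k8m, k8]
      have h8 : (9 : ℝ) * r ^ 8 ≠ 0 := by positivity
      field_simp
      ring
    · -- entry (2,0)
      show deriv f x = _
      rw [hr, k13, k1]
      field_simp
    · -- entry (2,1)
      have h21 : HasDerivAt (fun t => deriv f t * iteratedDeriv 2 f t ^ (-(1 : ℝ) / 3))
          (iteratedDeriv 2 f x * iteratedDeriv 2 f x ^ (-(1 : ℝ) / 3) +
            deriv f x * (iteratedDeriv 3 f x * (-(1 : ℝ) / 3) *
              iteratedDeriv 2 f x ^ (-(1 : ℝ) / 3 - 1))) x := by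
        exact hd2.mul (hd3.rpow_const (Or.inl hG.ne'))
      rw [h21.deriv, hr, k13, k1, k4, k5]
      field_simp
      ring
    · -- entry (2,2)
      have hsq : HasDerivAt (fun t => iteratedDeriv 2 f t ^ 2)
          (2 * iteratedDeriv 2 f x * iteratedDeriv 3 f x) x := by
        have h := hd3.mul hd3
        simp only [← pow_two] at h
        exact h.congr_deriv (by ring)
      have hinner : HasDerivAt
          (fun t => iteratedDeriv 2 f t ^ 2 - 1 / 3 * iteratedDeriv 3 f t * deriv f t)
          (2 * iteratedDeriv 2 f x * iteratedDeriv 3 f x -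
            (1 / 3 * iteratedDeriv 4 f x * deriv f x +
              1 / 3 * iteratedDeriv 3 f x * iteratedDeriv 2 f x)) x := by
        exact hsq.sub ((hd4.const_mul ((1 / 3) : ℝ)).mul hd2)
      have h22 : HasDerivAt
          (fun t => (iteratedDeriv 2 f t ^ 2 - 1 / 3 * iteratedDeriv 3 f t * deriv f t) *
            iteratedDeriv 2 f t ^ (-(5 : ℝ) / 3))
          ((2 * iteratedDeriv 2 f x * iteratedDeriv 3 f x -
              (1 / 3 * iteratedDeriv 4 f x * deriv f x +
                1 / 3 * iteratedDeriv 3 f x * iteratedDeriv 2 f x)) *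
              iteratedDeriv 2 f x ^ (-(5 : ℝ) / 3) +
            (iteratedDeriv 2 f x ^ 2 - 1 / 3 * iteratedDeriv 3 f x * deriv f x) *
              (iteratedDeriv 3 f x * (-(5 : ℝ) / 3) *
                iteratedDeriv 2 f x ^ (-(5 : ℝ) / 3 - 1))) x := by
        exact hinner.mul (hd3.rpow_const (Or.inl hG.ne'))
      rw [h22.deriv, hr, k13, k1, k5, k8m, k8]
      field_simp
      ring
end

section
/- On ℝ⁶ with coordinates (x, y, a, b, c, κ), let Z be the vector field Z(p) = (1, c/a, b/a, κ, (1+b·c)/a², 0), defined on the open set where a ≠ 0, and for a differentiable function h : ℝ⁶ → ℝ let Zh denote the directional derivative p ↦ Dh(p)[Z(p)]. Define z₀(p) = y and z_j = Z z_{j−1} for j = 1, 2, 3, 4. Then at every point p = (x, y, a, b, c, κ) with a ≠ 0: z₁(p) = c/a, z₂(p) = a^(−3), z₃(p) = −3·b·a^(−5), and z₄(p) = 3·(5·b² − a²·κ)·a^(−7). -/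
/-- The total differential operator `Z` on `ℝ⁶` with coordinates
`(x, y, a, b, c, κ) = (p 0, p 1, p 2, p 3, p 4, p 5)`. -/
noncomputable def Zvf (p : Fin 6 → ℝ) : Fin 6 → ℝ :=
  ![1, p 4 / p 2, p 3 / p 2, p 5, (1 + p 3 * p 4) / (p 2) ^ 2, 0]

/-- Iterated directional derivatives along `Z`, starting from `z₀ = y`. -/
noncomputable def zcoord : ℕ → (Fin 6 → ℝ) → ℝ
  | 0 => fun p => p 1
  | j + 1 => fun p => fderiv ℝ (zcoord j) p (Zvf p)

/-! Since `fderiv` only sees the germ of a function, the closed form of `zⱼ` on the open set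
`a ≠ 0` is differentiated by the product and chain rules (it is a monomial in `a`, `b`, `c`),
and pairing that differential with `Z` gives the closed form of `zⱼ₊₁`. -/

open Filter Topology

lemma hasFDerivAt_apply_zpow {𝕜 ι : Type*} [NontriviallyNormedField 𝕜] [Fintype ι] (i : ι)
    (m : ℤ) {q : ι → 𝕜} (hq : q i ≠ 0) :
    HasFDerivAt (fun r : ι → 𝕜 => r i ^ m)
      ((m * q i ^ (m - 1)) • ContinuousLinearMap.proj (R := 𝕜) (φ := fun _ : ι => 𝕜) i) q :=
  (hasDerivAt_zpow m (q i) (Or.inl hq)).comp_hasFDerivAt (f := fun r : ι → 𝕜 => r i) q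
    (hasFDerivAt_apply i q)

lemma zcoord_succ_eq_of_hasFDerivAt {j : ℕ} {p : Fin 6 → ℝ} {f : (Fin 6 → ℝ) → ℝ}
    {f' : (Fin 6 → ℝ) →L[ℝ] ℝ} (hj : ∀ q : Fin 6 → ℝ, q 2 ≠ 0 → zcoord j q = f q)
    (hp : p 2 ≠ 0) (hf : HasFDerivAt f f' p) :
    zcoord (j + 1) p = f' (Zvf p) := by
  have hopen : IsOpen {q : Fin 6 → ℝ | q 2 ≠ 0} :=
    isOpen_compl_singleton.preimage (continuous_apply 2)
  have hev : zcoord j =ᶠ[𝓝 p] f := eventuallyEq_of_mem (hopen.mem_nhds hp) hj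
  show fderiv ℝ (zcoord j) p (Zvf p) = _
  rw [hev.fderiv_eq, hf.fderiv]

lemma zcoord_one (p : Fin 6 → ℝ) : zcoord 1 p = p 4 / p 2 := by
  show fderiv ℝ (fun q : Fin 6 → ℝ => q 1) p (Zvf p) = _
  rw [(hasFDerivAt_apply 1 p).fderiv]
  rfl

lemma zcoord_two {p : Fin 6 → ℝ} (hp : p 2 ≠ 0) : zcoord 2 p = p 2 ^ (-3 : ℤ) := by
  rw [zcoord_succ_eq_of_hasFDerivAt (fun q _ => by simp [zcoord_one, div_eq_mul_inv]) hp
    ((hasFDerivAt_apply 4 p).mul (hasFDerivAt_apply_zpow 2 (-1) hp))]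
  simp only [Zvf, add_apply, smul_apply, ContinuousLinearMap.proj_apply, Matrix.cons_val,
    smul_eq_mul]
  push_cast
  field_simp
  ring

lemma zcoord_three {p : Fin 6 → ℝ} (hp : p 2 ≠ 0) :
    zcoord 3 p = -3 * p 3 * p 2 ^ (-5 : ℤ) := by
  rw [zcoord_succ_eq_of_hasFDerivAt (fun _ => zcoord_two) hp (hasFDerivAt_apply_zpow 2 (-3) hp)]
  simp only [Zvf, smul_apply, ContinuousLinearMap.proj_apply, Matrix.cons_val,
    smul_eq_mul]
  push_cast
  field_simp

lemma zcoord_four {p : Fin 6 → ℝ} (hp : p 2 ≠ 0) :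
    zcoord 4 p = 3 * (5 * p 3 ^ 2 - p 2 ^ 2 * p 5) * p 2 ^ (-7 : ℤ) := by
  rw [zcoord_succ_eq_of_hasFDerivAt (fun _ => zcoord_three) hp
    (((hasFDerivAt_apply 3 p).const_mul (-3)).mul (hasFDerivAt_apply_zpow 2 (-5) hp))]
  simp only [Zvf, add_apply, smul_apply, ContinuousLinearMap.proj_apply, Matrix.cons_val,
    smul_eq_mul]
  push_cast
  field_simp
  ring

/-- The contact coordinates produced by repeated differentiation of `z₀ = y`
along `Z` are `z₁ = c/a`, `z₂ = a⁻³`, `z₃ = -3 b a⁻⁵`, `z₄ = 3(5b² - a²κ)a⁻⁷`. -/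
theorem contact_coordinates_equiaffine_plane (p : Fin 6 → ℝ) (hp : p 2 ≠ 0) :
    zcoord 1 p = p 4 / p 2 ∧
    zcoord 2 p = (p 2) ^ (-(3 : ℤ)) ∧
    zcoord 3 p = -3 * p 3 * (p 2) ^ (-(5 : ℤ)) ∧
    zcoord 4 p = 3 * (5 * (p 3) ^ 2 - (p 2) ^ 2 * p 5) * (p 2) ^ (-(7 : ℤ)) :=
  ⟨zcoord_one p, zcoord_two hp, zcoord_three hp, zcoord_four hp⟩
end
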